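/- arXiv:1910.01487 — 7 statements merged into one kernel-verified Lean document; each statement's English description precedes it below -/
import Mathlib

section
/- Let Z ∈ ℝ^{d_in × n} be a fixed matrix and a > 0. For every ε > 0 there exists a finite set U of matrices in ℝ^{d_out × n} with cardinality |U| ≤ (1 + 2a‖Z‖_F/ε)^{d_in · d_out} such that for every A ∈ ℝ^{d_out × d_in} with ‖A‖_F ≤ a there is some u ∈ U with ‖AZ − u‖_F ≤ ε. -/
noncomputable def frobNorm {α β : Type*} [Fintype α] [Fintype β] (M : Matrix α β ℝ) : ℝ :=
  Real.sqrt (∑ i, ∑ j, (M i j) ^ 2)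

/-!
A maximal `δ`-separated subset of the ball of radius `a` in a `d`-dimensional normed space is a
`δ`-net, and the disjoint balls of radius `δ / 2` around its points fit into the ball of radius
`a + δ / 2`; comparing volumes bounds its size by `(1 + 2a/δ)^d`. For the Frobenius norm,
`A ↦ A * Z` is `‖Z‖_F`-Lipschitz, so with `δ = ε / ‖Z‖_F` the image of such a net in
`ℝ^{d_out × d_in}` is an `ε`-net of `{A * Z | ‖A‖_F ≤ a}`.
-/

open Metric MeasureTheory Module Finset
open scoped NNReal ENNReal

theorem TotallyBounded.packingNumber_ne_top {X : Type*} [PseudoEMetricSpace X] {A : Set X}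
    (hA : TotallyBounded A) {ε : ℝ≥0} (hε : ε ≠ 0) : packingNumber ε A ≠ ⊤ := by
  obtain ⟨N, -, hN, hcover⟩ := exists_finite_isCover_of_totallyBounded (ε := ε / 2) (by simpa) hA
  refine ne_top_of_le_ne_top hN.encard_lt_top.ne ?_
  calc packingNumber ε A = packingNumber (2 * (ε / 2)) A := by rw [mul_div_cancel₀ _ two_ne_zero]
    _ ≤ externalCoveringNumber (ε / 2) A := packingNumber_two_mul_le_externalCoveringNumber _ _
    _ ≤ N.encard := hcover.externalCoveringNumber_le_encard

section FiniteDimensional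

variable {E : Type*} [NormedAddCommGroup E] [NormedSpace ℝ E] [FiniteDimensional ℝ E]

theorem Metric.IsSeparated.card_le_of_subset_closedBall {C : Finset E} {δ : ℝ≥0} {c : E} {a : ℝ}
    (hC : IsSeparated δ (C : Set E)) (hCa : (C : Set E) ⊆ closedBall c a) (ha : 0 ≤ a)
    (hδ : 0 < δ) : (#C : ℝ) ≤ (1 + 2 * a / δ) ^ finrank ℝ E := by
  let : MeasurableSpace E := borel E
  have : BorelSpace E := ⟨rfl⟩
  rcases subsingleton_or_nontrivial E with hE | hE
  · rw [finrank_zero_of_subsingleton, pow_zero]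
    exact_mod_cast card_le_one.mpr fun x _ y _ ↦ Subsingleton.elim x y
  set μ : Measure E := Measure.addHaar
  have hr : (0 : ℝ) < δ / 2 := by positivity
  have hball : ∀ x : E, ∀ r : ℝ, 0 ≤ r →
      μ.real (ball x r) = r ^ finrank ℝ E * μ.real (ball 0 1) := fun x r hr ↦ by
    simp [measureReal_def, Measure.addHaar_ball μ x hr, ENNReal.toReal_mul, hr]
  have hdisj : (C : Set E).PairwiseDisjoint (ball · (δ / 2)) := fun s hs t ht hst ↦
    ball_disjoint_ball <| by
      have hsep : (δ : ℝ≥0∞) < edist s t := hC hs ht hst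
      rw [← not_le, edist_le_coe, not_le, ← NNReal.coe_lt_coe, coe_nndist] at hsep
      linarith
  have hsub : (⋃ s ∈ C, ball s (δ / 2 : ℝ)) ⊆ ball c (a + δ / 2) :=
    Set.iUnion₂_subset fun s hs ↦ ball_subset_ball' (by linarith [mem_closedBall.mp (hCa hs)])
  have hvol : #C * ((δ / 2 : ℝ) ^ finrank ℝ E * μ.real (ball 0 1))
      ≤ (a + δ / 2) ^ finrank ℝ E * μ.real (ball 0 1) := by
    calc #C * ((δ / 2 : ℝ) ^ finrank ℝ E * μ.real (ball 0 1))
        = ∑ s ∈ C, μ.real (ball s (δ / 2)) := by simp [hball _ _ hr.le]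
      _ = μ.real (⋃ s ∈ C, ball s (δ / 2 : ℝ)) :=
        (measureReal_biUnion_finset hdisj fun _ _ ↦ measurableSet_ball).symm
      _ ≤ μ.real (ball c (a + δ / 2)) := measureReal_mono hsub
      _ = _ := hball _ _ (by positivity)
  have hunit : 0 < μ.real (ball (0 : E) 1) :=
    ENNReal.toReal_pos (measure_ball_pos μ 0 one_pos).ne' measure_ball_lt_top.ne
  calc (#C : ℝ) ≤ (a + δ / 2) ^ finrank ℝ E / (δ / 2 : ℝ) ^ finrank ℝ E := by
        rw [le_div_iff₀ (by positivity), ← mul_le_mul_iff_left₀ hunit, mul_assoc]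
        exact hvol
    _ = (1 + 2 * a / δ) ^ finrank ℝ E := by
        rw [← div_pow]
        congr 1
        field_simp
        ring

theorem exists_finset_card_le_isCover_closedBall (c : E) {a : ℝ} (ha : 0 ≤ a) {δ : ℝ≥0}
    (hδ : 0 < δ) : ∃ N : Finset E, (#N : ℝ) ≤ (1 + 2 * a / δ) ^ finrank ℝ E ∧
      IsCover δ (closedBall c a) N := by
  have hpack := (isCompact_closedBall c a).totallyBounded.packingNumber_ne_top hδ.ne'
  have hfin : (maximalSeparatedSet δ (closedBall c a)).Finite := by
    rw [← Set.encard_ne_top_iff, encard_maximalSeparatedSet hpack]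
    exact hpack
  refine ⟨hfin.toFinset, ?_, by simpa using isCover_maximalSeparatedSet hpack⟩
  refine IsSeparated.card_le_of_subset_closedBall (c := c) ?_ ?_ ha hδ
  · simpa using isSeparated_maximalSeparatedSet
  · simpa using maximalSeparatedSet_subset

theorem LipschitzWith.exists_finset_card_le_forall_dist_le {F : Type*} [PseudoMetricSpace F]
    {f : E → F} {K : ℝ≥0} (hf : LipschitzWith K f) (c : E) {a : ℝ} (ha : 0 ≤ a) {ε : ℝ}
    (hε : 0 < ε) : ∃ U : Finset F, (#U : ℝ) ≤ (1 + 2 * a * K / ε) ^ finrank ℝ E ∧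
      ∀ x ∈ closedBall c a, ∃ u ∈ U, dist (f x) u ≤ ε := by
  classical
  rcases eq_or_ne K 0 with rfl | hK
  · refine ⟨{f c}, by simp, fun x _ ↦ ⟨f c, mem_singleton_self _, ?_⟩⟩
    simpa using (hf.dist_le_mul x c).trans (by simpa using hε.le)
  lift ε to ℝ≥0 using hε.le
  obtain ⟨N, hcard, hN⟩ := exists_finset_card_le_isCover_closedBall c ha
    (div_pos (by exact_mod_cast hε) (pos_iff_ne_zero.mpr hK) : 0 < ε / K)
  refine ⟨N.image f, ?_, fun x hx ↦ ?_⟩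
  · calc (#(N.image f) : ℝ) ≤ #N := by exact_mod_cast card_image_le
      _ ≤ _ := hcard
      _ = _ := by rw [NNReal.coe_div, div_div_eq_mul_div]
  · have hcover := (hN.image_lipschitz hf).subset_iUnion_closedBall (Set.mem_image_of_mem f hx)
    rw [mul_div_cancel₀ _ hK] at hcover
    simpa using hcover

end FiniteDimensional

section Frobenius

attribute [local instance] Matrix.frobeniusNormedAddCommGroup Matrix.frobeniusNormedSpace

theorem frobNorm_eq_norm {m n : Type*} [Fintype m] [Fintype n] (M : Matrix m n ℝ) :
    frobNorm M = ‖M‖ := by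
  simp [frobNorm, Matrix.frobenius_norm_def, Real.sqrt_eq_rpow]

theorem Matrix.lipschitzWith_mul_right_frobenius {l m n : Type*} [Fintype l] [Fintype m]
    [Fintype n] (Z : Matrix m n ℝ) : LipschitzWith ‖Z‖₊ fun A : Matrix l m ℝ ↦ A * Z :=
  .of_dist_le_mul fun A B ↦ by
    simpa [dist_eq_norm, ← Matrix.sub_mul, mul_comm] using Matrix.frobenius_norm_mul (A - B) Z

/-- Covering number bound for a fully connected layer `A ↦ AZ` with
`‖A‖_F ≤ a`: for every ε > 0 there is a cover of size at most
`(1 + 2a‖Z‖_F/ε)^(d_in·d_out)`. -/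
theorem covering_number_fc_layer (din dout n : ℕ)
    (Z : Matrix (Fin din) (Fin n) ℝ) (a : ℝ) (ha : 0 < a) :
    ∀ ε > (0 : ℝ), ∃ U : Finset (Matrix (Fin dout) (Fin n) ℝ),
      (U.card : ℝ) ≤ (1 + 2 * a * frobNorm Z / ε) ^ (din * dout) ∧
      ∀ A : Matrix (Fin dout) (Fin din) ℝ, frobNorm A ≤ a →
        ∃ u ∈ U, frobNorm (A * Z - u) ≤ ε := by
  intro ε hε
  obtain ⟨U, hcard, hU⟩ := (Matrix.lipschitzWith_mul_right_frobenius (l := Fin dout) Z)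
    |>.exists_finset_card_le_forall_dist_le 0 ha.le hε
  refine ⟨U, ?_, fun A hA ↦ ?_⟩
  · rwa [finrank_matrix, finrank_self, mul_one, Fintype.card_fin, Fintype.card_fin, mul_comm dout,
      coe_nnnorm, ← frobNorm_eq_norm] at hcard
  · obtain ⟨u, hu, hdist⟩ := hU A (by rwa [mem_closedBall, dist_zero_right, ← frobNorm_eq_norm])
    exact ⟨u, hu, by rwa [frobNorm_eq_norm, ← dist_eq_norm]⟩

end Frobenius
end

section
/- Let W, V ∈ ℝ^{c×r} be two convolutional weight matrices and let γ be the fully connected matrix construction determined by m injective index maps S₁,…,S_m. Then for every Z ∈ ℝ^{d×n}, ‖γ(W)Z − γ(V)Z‖_F ≤ √m · ‖W − V‖_F · ‖Z‖_F. -/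
/-- The fully connected matrix `γ(W) ∈ ℝ^{cm×d}` built from a convolutional weight
`W ∈ ℝ^{c×r}` via `m` index maps `S k : Fin r → Fin d`: the row indexed by `(i,k)` has
entry `W i p` at column `S k p` and zeros elsewhere (when each `S k` is injective). -/
noncomputable def gamma {c r d m : ℕ} (S : Fin m → Fin r → Fin d)
    (W : Matrix (Fin c) (Fin r) ℝ) : Matrix (Fin c × Fin m) (Fin d) ℝ :=
  fun ik j => ∑ p, if S ik.2 p = j then W ik.1 p else 0

/-- `‖γ(W)Z − γ(V)Z‖_F ≤ √m · ‖W − V‖_F · ‖Z‖_F`. -/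
theorem gamma_mul_sub_frobNorm_le (c r d m n : ℕ)
    (S : Fin m → Fin r → Fin d) (hS : ∀ k, Function.Injective (S k))
    (W V : Matrix (Fin c) (Fin r) ℝ) (Z : Matrix (Fin d) (Fin n) ℝ) :
    frobNorm (gamma S W * Z - gamma S V * Z) ≤
      Real.sqrt m * frobNorm (W - V) * frobNorm Z := by
  set U : Matrix (Fin c) (Fin r) ℝ := W - V with hU
  set A : ℝ := ∑ i, ∑ p, (U i p) ^ 2 with hA
  set B : ℝ := ∑ q, ∑ j, (Z q j) ^ 2 with hB
  have hA0 : (0:ℝ) ≤ A := by positivity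
  have hB0 : (0:ℝ) ≤ B := by positivity
  -- entry formula
  have hkey : ∀ (ik : Fin c × Fin m) (j : Fin n),
      (gamma S W * Z - gamma S V * Z) ik j = ∑ p, U ik.1 p * Z (S ik.2 p) j := by
    intro ik j
    simp only [Matrix.sub_apply, Matrix.mul_apply, gamma, ← Finset.sum_sub_distrib,
      Finset.sum_mul]
    rw [Finset.sum_comm]
    refine Finset.sum_congr rfl fun p _ => ?_
    rw [Finset.sum_eq_single (S ik.2 p)]
    · simp [hU, sub_mul]
    · intro q _ hq; simp [Ne.symm hq]
    · simp
  -- bound the squared sum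
  have hsq : (∑ ik : Fin c × Fin m, ∑ j, ((gamma S W * Z - gamma S V * Z) ik j) ^ 2)
      ≤ (m : ℝ) * A * B := by
    have hterm : ∀ (ik : Fin c × Fin m) (j : Fin n),
        ((gamma S W * Z - gamma S V * Z) ik j) ^ 2 ≤
          (∑ p, (U ik.1 p) ^ 2) * (∑ q, (Z q j) ^ 2) := by
      intro ik j
      rw [hkey]
      calc (∑ p, U ik.1 p * Z (S ik.2 p) j) ^ 2
          ≤ (∑ p, (U ik.1 p) ^ 2) * (∑ p, (Z (S ik.2 p) j) ^ 2) :=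
            Finset.sum_mul_sq_le_sq_mul_sq Finset.univ _ _
        _ ≤ (∑ p, (U ik.1 p) ^ 2) * (∑ q, (Z q j) ^ 2) := by
            refine mul_le_mul_of_nonneg_left ?_ (by positivity)
            have himg : (∑ p, (Z (S ik.2 p) j) ^ 2)
                = ∑ q ∈ Finset.univ.image (S ik.2), (Z q j) ^ 2 := by
              rw [Finset.sum_image (fun a _ b _ h => hS ik.2 h)]
            rw [himg]
            exact Finset.sum_le_sum_of_subset_of_nonneg (Finset.subset_univ _)
              (fun q _ _ => by positivity)
    calc (∑ ik : Fin c × Fin m, ∑ j, ((gamma S W * Z - gamma S V * Z) ik j) ^ 2)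
        ≤ ∑ ik : Fin c × Fin m, ∑ j, (∑ p, (U ik.1 p) ^ 2) * (∑ q, (Z q j) ^ 2) := by
          exact Finset.sum_le_sum fun ik _ => Finset.sum_le_sum fun j _ => hterm ik j
      _ = (m : ℝ) * A * B := by
          have hcol : ∀ i : Fin c,
              (∑ j : Fin n, (∑ p, (U i p) ^ 2) * (∑ q, (Z q j) ^ 2))
                = (∑ p, (U i p) ^ 2) * B := by
            intro i
            rw [← Finset.mul_sum, hB, Finset.sum_comm]
          rw [Fintype.sum_prod_type]
          simp only [hcol]
          simp only [Finset.sum_const, Finset.card_univ, Fintype.card_fin, nsmul_eq_mul]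
          rw [← Finset.mul_sum, ← Finset.sum_mul, ← hA]
          ring
  -- conclude
  have hfr : frobNorm (gamma S W * Z - gamma S V * Z) ≤ Real.sqrt ((m:ℝ) * A * B) :=
    Real.sqrt_le_sqrt hsq
  calc frobNorm (gamma S W * Z - gamma S V * Z) ≤ Real.sqrt ((m:ℝ) * A * B) := hfr
    _ = Real.sqrt m * frobNorm U * frobNorm Z := by
        rw [Real.sqrt_mul (by positivity), Real.sqrt_mul (by positivity)]
        rfl
    _ = Real.sqrt m * frobNorm (W - V) * frobNorm Z := by rw [hU]
end

section
/- Let X ∈ ℝ^{d×n}, and for i = 1,…,L let σᵢ : ℝ^{dᵢ×n} → ℝ^{dᵢ×n} be ρᵢ-Lipschitz with respect to the Frobenius norm with σᵢ(0)=0, and let aᵢ, sᵢ > 0, with d₀ = d. Define the hypothesis family H = { σ_L(A_L σ_{L−1}(A_{L−1} ⋯ σ₁(A₁ X) ⋯)) : Aᵢ ∈ ℝ^{dᵢ×d_{i−1}}, ‖Aᵢ‖_F ≤ aᵢ and ‖Aᵢ‖_σ ≤ sᵢ for all i } ⊆ ℝ^{d_L×n}, and let R_A = (2∏_{i=1}^{L}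 ρᵢ sᵢ)·(Σ_{i=1}^{L} dᵢ² d_{i−1}² aᵢ / sᵢ)·L². Then for every ε > 0 there exists a finite set U of matrices in ℝ^{d_L×n} with ln|U| ≤ (‖X‖_F · R_A / ε)^{1/2} such that every element of H is within Frobenius distance ε of some element of U. -/
noncomputable def specNorm {α β : Type*} [Fintype α] [Fintype β] [DecidableEq β]
    (M : Matrix α β ℝ) : ℝ :=
  ‖LinearMap.toContinuousLinearMap (Matrix.toEuclideanLin M)‖

noncomputable def netOutput {n : ℕ} (d : ℕ → ℕ)
    (C : ∀ i : ℕ, Matrix (Fin (d (i+1))) (Fin (d i)) ℝ)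
    (σ : ∀ i : ℕ, Matrix (Fin (d (i+1))) (Fin n) ℝ → Matrix (Fin (d (i+1))) (Fin n) ℝ)
    (X : Matrix (Fin (d 0)) (Fin n) ℝ) : (ℓ : ℕ) → Matrix (Fin (d ℓ)) (Fin n) ℝ
  | 0 => X
  | (ℓ+1) => σ ℓ (C ℓ * netOutput d C σ X ℓ)

/-!
Cover each layer's weight set `{A | ‖A‖_F ≤ aᵢ, ‖A‖_σ ≤ sᵢ}` in Frobenius norm at scale
`η sᵢ`; by volume comparison this takes at most `(1 + 2aᵢ/(η sᵢ))^(dᵢ₊₁ dᵢ)` matrices.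
Replacing every weight by a nearby cover element changes the output of layer `i` by at most
`ρᵢ sᵢ` times the incoming error plus `ρᵢ η sᵢ` times the size of the input, which is at most
`∏_{j<i} ρⱼ sⱼ ‖X‖`; so the outputs of the networks built from the layer covers form an
`L η ∏ ρᵢ sᵢ ‖X‖`-cover. Taking `η = ε / (L ∏ ρᵢ sᵢ ‖X‖)`, the bound `log (1 + x) ≤ √x` and
Cauchy–Schwarz over the `L` layers give the estimate of `log |U|`.
-/

open Finset Metric MeasureTheory
open scoped ENNReal NNReal

attribute [local instance] Matrix.frobeniusNormedAddCommGroup Matrix.frobeniusNormedSpace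

section Norms

variable {α β γ : Type*} [Fintype α] [Fintype β] [Fintype γ]

lemma frobNorm_eq_norm_s5 (M : Matrix α β ℝ) : frobNorm M = ‖M‖ := by
  simp [frobNorm, Matrix.frobenius_norm_def, Real.sqrt_eq_rpow]

lemma specNorm_nonneg [DecidableEq β] (M : Matrix α β ℝ) : 0 ≤ specNorm M :=
  norm_nonneg _

lemma norm_mul_le_specNorm_mul [DecidableEq β] (M : Matrix α β ℝ) (N : Matrix β γ ℝ) :
    ‖M * N‖ ≤ specNorm M * ‖N‖ := by
  have hcol (j : γ) : ∑ i, (M * N) i j ^ 2 ≤ specNorm M ^ 2 * ∑ k, N k j ^ 2 := by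
    have h := (Matrix.toEuclideanLin M).toContinuousLinearMap.le_opNorm
      (WithLp.toLp 2 fun k => N k j)
    rw [← sq_le_sq₀ (norm_nonneg _) (by positivity), mul_pow,
      EuclideanSpace.norm_sq_eq, EuclideanSpace.norm_sq_eq] at h
    simpa [specNorm, Matrix.mul_apply, Matrix.mulVec, dotProduct] using h
  rw [← frobNorm_eq_norm_s5, ← frobNorm_eq_norm_s5, frobNorm, frobNorm, Finset.sum_comm,
    Finset.sum_comm (f := fun k j => N k j ^ 2)]
  calc √(∑ j, ∑ i, (M * N) i j ^ 2) ≤ √(∑ j, specNorm M ^ 2 * ∑ k, N k j ^ 2) :=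
        Real.sqrt_le_sqrt (sum_le_sum fun j _ => hcol j)
    _ = specNorm M * √(∑ j, ∑ k, N k j ^ 2) := by
        rw [← mul_sum, Real.sqrt_mul (sq_nonneg _), Real.sqrt_sq (specNorm_nonneg M)]

end Norms

section Covering

open Module

variable {E : Type*} [NormedAddCommGroup E] [NormedSpace ℝ E] [FiniteDimensional ℝ E]

/-- Volume comparison: the balls of radius `δ / 2` around the points of `S` are disjoint and lie
in the ball of radius `r + δ / 2`. -/
lemma card_le_of_pairwise_lt_dist {S : Finset E} {x : E} {r δ : ℝ} (hr : 0 ≤ r) (hδ : 0 < δ)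
    (hS : ∀ y ∈ S, y ∈ closedBall x r) (hsep : (S : Set E).Pairwise fun y z => δ < dist y z) :
    (#S : ℝ) ≤ (1 + 2 * r / δ) ^ finrank ℝ E := by
  borelize E
  let μ : Measure E := Measure.addHaar
  have hdisj : (S : Set E).PairwiseDisjoint fun y => ball y (δ / 2) := fun y hy z hz hyz =>
    ball_disjoint_ball (by linarith [hsep hy hz hyz])
  have hsub : ⋃ y ∈ S, ball y (δ / 2) ⊆ ball x (r + δ / 2) :=
    Set.iUnion₂_subset fun y hy => ball_subset_ball' (by linarith [mem_closedBall.1 (hS y hy)])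
  have hvol : (#S : ℝ≥0∞) * ENNReal.ofReal ((δ / 2) ^ finrank ℝ E) * μ (ball 0 1) ≤
      ENNReal.ofReal ((r + δ / 2) ^ finrank ℝ E) * μ (ball 0 1) :=
    calc (#S : ℝ≥0∞) * ENNReal.ofReal ((δ / 2) ^ finrank ℝ E) * μ (ball 0 1)
        = μ (⋃ y ∈ S, ball y (δ / 2)) := by
          rw [measure_biUnion_finset hdisj fun _ _ => measurableSet_ball]
          simp only [μ.addHaar_ball_of_pos _ (half_pos hδ), sum_const, nsmul_eq_mul, mul_assoc]
      _ ≤ μ (ball x (r + δ / 2)) := measure_mono hsub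
      _ = ENNReal.ofReal ((r + δ / 2) ^ finrank ℝ E) * μ (ball 0 1) :=
          μ.addHaar_ball_of_pos _ (by positivity)
  have hvol' := (ENNReal.mul_le_mul_iff_left (measure_ball_pos μ _ one_pos).ne'
    measure_ball_lt_top.ne).1 hvol
  rw [← ENNReal.ofReal_natCast, ← ENNReal.ofReal_mul (by positivity),
    ENNReal.ofReal_le_ofReal_iff (by positivity), ← le_div_iff₀ (by positivity), ← div_pow] at hvol'
  calc (#S : ℝ) ≤ ((r + δ / 2) / (δ / 2)) ^ finrank ℝ E := hvol'
    _ = (1 + 2 * r / δ) ^ finrank ℝ E := by congr 1; field_simp; ring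

lemma packingNumber_le_of_subset_closedBall {A : Set E} {x : E} {r : ℝ} {δ : ℝ≥0}
    (hr : 0 ≤ r) (hδ : 0 < δ) (hA : A ⊆ closedBall x r) :
    packingNumber δ A ≤ ⌊(1 + 2 * r / δ) ^ finrank ℝ E⌋₊ := by
  refine iSup₂_le fun C hCA => iSup_le fun hC => ?_
  by_contra! hlt
  obtain ⟨S, hSC, hScard⟩ := Set.exists_subset_encard_eq (Order.add_one_le_of_lt hlt)
  have hSfin : S.Finite := Set.finite_of_encard_eq_coe hScard
  have hbound := card_le_of_pairwise_lt_dist (S := hSfin.toFinset) hr hδ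
    (fun y hy => hA (hCA (hSC (hSfin.mem_toFinset.1 hy))))
    (by
      rw [hSfin.coe_toFinset]
      refine (hC.mono hSC).imp fun y z hyz => ?_
      rw [edist_dist, ← ENNReal.ofReal_coe_nnreal] at hyz
      exact (ENNReal.ofReal_lt_ofReal_iff'.1 hyz).1)
  have hcard : #hSfin.toFinset = ⌊(1 + 2 * r / δ) ^ finrank ℝ E⌋₊ + 1 := by
    have := hSfin.encard_eq_coe_toFinset_card
    rw [hScard] at this
    exact_mod_cast this.symm
  rw [hcard, Nat.cast_add_one] at hbound
  exact (Nat.lt_floor_add_one _).not_ge hbound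

lemma exists_finset_cover_of_subset_closedBall {A : Set E} {x : E} {r δ : ℝ}
    (hr : 0 ≤ r) (hδ : 0 < δ) (hA : A ⊆ closedBall x r) :
    ∃ T : Finset E, ↑T ⊆ A ∧ (#T : ℝ) ≤ (1 + 2 * r / δ) ^ finrank ℝ E ∧
      ∀ y ∈ A, ∃ z ∈ T, dist y z ≤ δ := by
  lift δ to ℝ≥0 using hδ.le
  have hpack := packingNumber_le_of_subset_closedBall hr (mod_cast hδ) hA
  have hcov : coveringNumber δ A ≠ ⊤ :=
    ((coveringNumber_le_packingNumber δ A).trans hpack).trans_lt (ENat.natCast_lt_top _) |>.ne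
  have hfin : (minimalCover δ A).Finite := finite_minimalCover
  refine ⟨hfin.toFinset, by simpa using minimalCover_subset, ?_, fun y hy => ?_⟩
  · have : #hfin.toFinset ≤ ⌊(1 + 2 * r / δ) ^ finrank ℝ E⌋₊ := by
      have h := hfin.encard_eq_coe_toFinset_card
      rw [encard_minimalCover hcov] at h
      exact_mod_cast h ▸ (coveringNumber_le_packingNumber δ A).trans hpack
    exact (Nat.cast_le.2 this).trans (Nat.floor_le (by positivity))
  · obtain ⟨z, hz, hyz⟩ := isCover_minimalCover hcov hy
    refine ⟨z, hfin.mem_toFinset.2 hz, ?_⟩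
    have hyz : edist y z ≤ δ := hyz
    rwa [edist_le_coe, ← NNReal.coe_le_coe, coe_nndist] at hyz

end Covering

lemma exists_finset_matrix_cover (p q : ℕ) {a s δ : ℝ} (ha : 0 ≤ a) (hδ : 0 < δ) :
    ∃ T : Finset (Matrix (Fin p) (Fin q) ℝ), (∀ B ∈ T, specNorm B ≤ s) ∧
      (#T : ℝ) ≤ (1 + 2 * a / δ) ^ (p * q) ∧
      ∀ A : Matrix (Fin p) (Fin q) ℝ, ‖A‖ ≤ a → specNorm A ≤ s → ∃ B ∈ T, ‖A - B‖ ≤ δ := by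
  obtain ⟨T, hTK, hcard, hcov⟩ := exists_finset_cover_of_subset_closedBall
    (A := {M : Matrix (Fin p) (Fin q) ℝ | ‖M‖ ≤ a ∧ specNorm M ≤ s}) (x := 0) ha hδ
    fun M hM => mem_closedBall_zero_iff.2 hM.1
  rw [Module.finrank_matrix, Fintype.card_fin, Fintype.card_fin, Module.finrank_self,
    mul_one] at hcard
  exact ⟨T, fun B hB => (hTK hB).2, hcard, fun A h₁ h₂ => by
    simpa only [dist_eq_norm] using hcov A ⟨h₁, h₂⟩⟩

section LogBounds

lemma one_add_sq_le_exp {t : ℝ} (ht : 0 ≤ t) : 1 + t ^ 2 ≤ Real.exp t := by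
  have h := Real.sum_le_exp_of_nonneg ht 4
  norm_num [Finset.sum_range_succ, Nat.factorial] at h
  nlinarith [sq_nonneg (t - 3 / 2), pow_nonneg ht 3]

lemma log_one_add_le_sqrt {x : ℝ} (hx : 0 ≤ x) : Real.log (1 + x) ≤ √x := by
  rw [Real.log_le_iff_le_exp (by linarith)]
  simpa [Real.sq_sqrt hx] using one_add_sq_le_exp (Real.sqrt_nonneg x)

lemma log_le_sqrt_of_le_prod_one_add_pow {ι : Type*} {t : Finset ι} {x : ι → ℝ} {k : ι → ℕ}
    (hx : ∀ i ∈ t, 0 ≤ x i) {N : ℕ} (hN : (N : ℝ) ≤ ∏ i ∈ t, (1 + x i) ^ k i) :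
    Real.log N ≤ √(#t * ∑ i ∈ t, (k i : ℝ) ^ 2 * x i) := by
  have hlog : Real.log N ≤ ∑ i ∈ t, k i * Real.log (1 + x i) := by
    have hone (i) (hi : i ∈ t) : 1 ≤ (1 + x i) ^ k i := one_le_pow₀ (by linarith [hx i hi])
    simp only [← Real.log_pow]
    rw [← Real.log_prod fun i hi => (zero_lt_one.trans_le (hone i hi)).ne']
    rcases N.eq_zero_or_pos with rfl | hN0
    · simpa using Real.log_nonneg (Finset.one_le_prod hone)
    · exact Real.log_le_log (by exact_mod_cast hN0) hN
  have hsqrt (i) (hi : i ∈ t) : k i * Real.log (1 + x i) ≤ √((k i : ℝ) ^ 2 * x i) := by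
    rw [Real.sqrt_mul (sq_nonneg _), Real.sqrt_sq (Nat.cast_nonneg _)]
    exact mul_le_mul_of_nonneg_left (log_one_add_le_sqrt (hx i hi)) (Nat.cast_nonneg _)
  refine hlog.trans <| (sum_le_sum hsqrt).trans <| Real.le_sqrt_of_sq_le ?_
  refine sq_sum_le_card_mul_sum_sq.trans_eq ?_
  congr 1
  exact sum_congr rfl fun i hi => Real.sq_sqrt (mul_nonneg (sq_nonneg _) (hx i hi))

end LogBounds

noncomputable def netImage {n : ℕ} (d : ℕ → ℕ)
    (σ : ∀ i : ℕ, Matrix (Fin (d (i+1))) (Fin n) ℝ → Matrix (Fin (d (i+1))) (Fin n) ℝ)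
    (X : Matrix (Fin (d 0)) (Fin n) ℝ)
    (T : ∀ i : ℕ, Finset (Matrix (Fin (d (i+1))) (Fin (d i)) ℝ)) :
    (ℓ : ℕ) → Finset (Matrix (Fin (d ℓ)) (Fin n) ℝ)
  | 0 => {X}
  | (ℓ+1) => (netImage d σ X T ℓ ×ˢ T ℓ).image fun p => σ ℓ (p.2 * p.1)

section Network

variable {n L : ℕ} {d : ℕ → ℕ}
  {σ : ∀ i : ℕ, Matrix (Fin (d (i+1))) (Fin n) ℝ → Matrix (Fin (d (i+1))) (Fin n) ℝ}
  {X : Matrix (Fin (d 0)) (Fin n) ℝ} {ρ s : ℕ → ℝ}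

lemma norm_netOutput_le {A : ∀ i : ℕ, Matrix (Fin (d (i+1))) (Fin (d i)) ℝ}
    (hρ : ∀ i < L, 0 ≤ ρ i) (hσ : ∀ i < L, ∀ M N, ‖σ i M - σ i N‖ ≤ ρ i * ‖M - N‖)
    (hσ0 : ∀ i < L, σ i 0 = 0) (hA : ∀ i < L, specNorm (A i) ≤ s i) {ℓ : ℕ} (hℓ : ℓ ≤ L) :
    ‖netOutput d A σ X ℓ‖ ≤ (∏ i ∈ range ℓ, ρ i * s i) * ‖X‖ := by
  induction ℓ with
  | zero => simp [netOutput]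
  | succ ℓ ih =>
    have hℓL : ℓ < L := hℓ
    have hs : 0 ≤ s ℓ := (specNorm_nonneg _).trans (hA ℓ hℓL)
    calc ‖netOutput d A σ X (ℓ + 1)‖
        = ‖σ ℓ (A ℓ * netOutput d A σ X ℓ) - σ ℓ 0‖ := by rw [hσ0 ℓ hℓL, sub_zero]; rfl
      _ ≤ ρ ℓ * ‖A ℓ * netOutput d A σ X ℓ‖ := by simpa using hσ ℓ hℓL _ 0
      _ ≤ ρ ℓ * (s ℓ * ((∏ i ∈ range ℓ, ρ i * s i) * ‖X‖)) :=
          mul_le_mul_of_nonneg_left ((norm_mul_le_specNorm_mul _ _).trans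
            (mul_le_mul (hA ℓ hℓL) (ih hℓL.le) (norm_nonneg _) hs)) (hρ ℓ hℓL)
      _ = (∏ i ∈ range (ℓ + 1), ρ i * s i) * ‖X‖ := by rw [prod_range_succ]; ring

lemma norm_netOutput_sub_netOutput_le {A B : ∀ i : ℕ, Matrix (Fin (d (i+1))) (Fin (d i)) ℝ}
    {η : ℝ} (hρ : ∀ i < L, 0 ≤ ρ i) (hσ : ∀ i < L, ∀ M N, ‖σ i M - σ i N‖ ≤ ρ i * ‖M - N‖)
    (hσ0 : ∀ i < L, σ i 0 = 0) (hA : ∀ i < L, specNorm (A i) ≤ s i)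
    (hB : ∀ i < L, specNorm (B i) ≤ s i) (hAB : ∀ i < L, ‖A i - B i‖ ≤ η * s i)
    {ℓ : ℕ} (hℓ : ℓ ≤ L) :
    ‖netOutput d A σ X ℓ - netOutput d B σ X ℓ‖ ≤ ℓ * η * (∏ i ∈ range ℓ, ρ i * s i) * ‖X‖ := by
  induction ℓ with
  | zero => simp [netOutput]
  | succ ℓ ih =>
    have hℓL : ℓ < L := hℓ
    set x := netOutput d A σ X ℓ
    set u := netOutput d B σ X ℓ
    set P := ∏ i ∈ range ℓ, ρ i * s i
    have hs : 0 ≤ s ℓ := (specNorm_nonneg _).trans (hA ℓ hℓL)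
    have hweight : ‖(A ℓ - B ℓ) * x‖ ≤ η * s ℓ * (P * ‖X‖) :=
      (Matrix.frobenius_norm_mul _ _).trans <| mul_le_mul (hAB ℓ hℓL)
        (norm_netOutput_le hρ hσ hσ0 hA hℓL.le) (norm_nonneg _) ((norm_nonneg _).trans (hAB ℓ hℓL))
    have hinput : ‖B ℓ * (x - u)‖ ≤ s ℓ * (ℓ * η * P * ‖X‖) :=
      (norm_mul_le_specNorm_mul _ _).trans <|
        mul_le_mul (hB ℓ hℓL) (ih hℓL.le) (norm_nonneg _) hs
    calc ‖netOutput d A σ X (ℓ + 1) - netOutput d B σ X (ℓ + 1)‖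
        = ‖σ ℓ (A ℓ * x) - σ ℓ (B ℓ * u)‖ := rfl
      _ ≤ ρ ℓ * ‖(A ℓ - B ℓ) * x + B ℓ * (x - u)‖ := by
          rw [Matrix.sub_mul, Matrix.mul_sub, sub_add_sub_cancel]; exact hσ ℓ hℓL _ _
      _ ≤ ρ ℓ * (η * s ℓ * (P * ‖X‖) + s ℓ * (ℓ * η * P * ‖X‖)) :=
          mul_le_mul_of_nonneg_left ((norm_add_le _ _).trans (add_le_add hweight hinput))
            (hρ ℓ hℓL)
      _ = ↑(ℓ + 1) * η * (∏ i ∈ range (ℓ + 1), ρ i * s i) * ‖X‖ := by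
          rw [prod_range_succ]; push_cast; ring

lemma card_netImage_le {T : ∀ i : ℕ, Finset (Matrix (Fin (d (i+1))) (Fin (d i)) ℝ)}
    (ℓ : ℕ) : #(netImage d σ X T ℓ) ≤ ∏ i ∈ range ℓ, #(T i) := by
  induction ℓ with
  | zero => simp [netImage]
  | succ ℓ ih =>
    rw [prod_range_succ]
    exact card_image_le.trans ((card_product _ _).trans_le (Nat.mul_le_mul_right _ ih))

lemma netOutput_mem_netImage {T : ∀ i : ℕ, Finset (Matrix (Fin (d (i+1))) (Fin (d i)) ℝ)}
    {B : ∀ i : ℕ, Matrix (Fin (d (i+1))) (Fin (d i)) ℝ} {ℓ : ℕ}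
    (hB : ∀ i < ℓ, B i ∈ T i) : netOutput d B σ X ℓ ∈ netImage d σ X T ℓ := by
  induction ℓ with
  | zero => exact mem_singleton_self X
  | succ ℓ ih =>
    exact mem_image.2 ⟨(netOutput d B σ X ℓ, B ℓ),
      mem_product.2 ⟨ih fun i hi => hB i (by omega), hB ℓ (by omega)⟩, rfl⟩

lemma norm_netOutput_sub_netOutput_zero_le {a : ℕ → ℝ}
    (hρ : ∀ i < L, 0 ≤ ρ i) (hσ : ∀ i < L, ∀ M N, ‖σ i M - σ i N‖ ≤ ρ i * ‖M - N‖)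
    (hσ0 : ∀ i < L, σ i 0 = 0) (hs : ∀ i < L, 0 < s i) (ha : ∀ i < L, 0 ≤ a i)
    {A : ∀ i : ℕ, Matrix (Fin (d (i+1))) (Fin (d i)) ℝ}
    (hA : ∀ i < L, ‖A i‖ ≤ a i ∧ specNorm (A i) ≤ s i) :
    ‖netOutput d A σ X L - netOutput d 0 σ X L‖ ≤
      (∑ j ∈ range L, a j / s j) * (L * (∏ i ∈ range L, ρ i * s i) * ‖X‖) := by
  have hA0 (i) (hi : i < L) : ‖A i - 0‖ ≤ (∑ j ∈ range L, a j / s j) * s i :=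
    calc ‖A i - 0‖ ≤ a i / s i * s i := by
          rw [sub_zero, div_mul_cancel₀ _ (hs i hi).ne']; exact (hA i hi).1
      _ ≤ _ := mul_le_mul_of_nonneg_right (single_le_sum (fun j hj =>
          div_nonneg (ha j (mem_range.1 hj)) (hs j (mem_range.1 hj)).le) (mem_range.2 hi))
          (hs i hi).le
  calc ‖netOutput d A σ X L - netOutput d 0 σ X L‖
      ≤ L * (∑ j ∈ range L, a j / s j) * (∏ i ∈ range L, ρ i * s i) * ‖X‖ :=
        norm_netOutput_sub_netOutput_le hρ hσ hσ0 (fun i hi => (hA i hi).2)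
          (fun i hi => by simpa [specNorm] using (hs i hi).le) hA0 le_rfl
    _ = _ := by ring

lemma exists_finset_netOutput_cover {a : ℕ → ℝ}
    (hρ : ∀ i < L, 0 ≤ ρ i) (hσ : ∀ i < L, ∀ M N, ‖σ i M - σ i N‖ ≤ ρ i * ‖M - N‖)
    (hσ0 : ∀ i < L, σ i 0 = 0) (hs : ∀ i < L, 0 < s i) (ha : ∀ i < L, 0 ≤ a i)
    {η : ℝ} (hη : 0 < η) :
    ∃ U : Finset (Matrix (Fin (d L)) (Fin n) ℝ),
      (#U : ℝ) ≤ ∏ i ∈ range L, (1 + 2 * a i / (η * s i)) ^ (d (i+1) * d i) ∧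
      ∀ A : ∀ i : ℕ, Matrix (Fin (d (i+1))) (Fin (d i)) ℝ,
        (∀ i < L, ‖A i‖ ≤ a i ∧ specNorm (A i) ≤ s i) →
        ∃ u ∈ U, ‖netOutput d A σ X L - u‖ ≤ L * η * (∏ i ∈ range L, ρ i * s i) * ‖X‖ := by
  have hlayer (i : ℕ) : ∃ T : Finset (Matrix (Fin (d (i+1))) (Fin (d i)) ℝ), i < L →
      (∀ B ∈ T, specNorm B ≤ s i) ∧ (#T : ℝ) ≤ (1 + 2 * a i / (η * s i)) ^ (d (i+1) * d i) ∧
      ∀ A, ‖A‖ ≤ a i → specNorm A ≤ s i → ∃ B ∈ T, ‖A - B‖ ≤ η * s i := by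
    by_cases hi : i < L
    · obtain ⟨T, hT⟩ := exists_finset_matrix_cover _ _ (ha i hi) (mul_pos hη (hs i hi))
      exact ⟨T, fun _ => hT⟩
    · exact ⟨∅, fun h => absurd h hi⟩
  choose T hT using hlayer
  refine ⟨netImage d σ X T L, ?_, fun A hA => ?_⟩
  · calc (#(netImage d σ X T L) : ℝ) ≤ ∏ i ∈ range L, (#(T i) : ℝ) := by
          exact_mod_cast card_netImage_le L
      _ ≤ _ := prod_le_prod (fun _ _ => Nat.cast_nonneg _)
          fun i hi => (hT i (mem_range.1 hi)).2.1
  have happrox (i : ℕ) : ∃ B, i < L → B ∈ T i ∧ ‖A i - B‖ ≤ η * s i := by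
    by_cases hi : i < L
    · obtain ⟨B, hB, hAB⟩ := (hT i hi).2.2 (A i) (hA i hi).1 (hA i hi).2
      exact ⟨B, fun _ => ⟨hB, hAB⟩⟩
    · exact ⟨0, fun h => absurd h hi⟩
  choose B hB using happrox
  exact ⟨_, netOutput_mem_netImage fun i hi => (hB i hi).1,
    norm_netOutput_sub_netOutput_le hρ hσ hσ0 (fun i hi => (hA i hi).2)
      (fun i hi => (hT i hi).1 _ (hB i hi).1) (fun i hi => (hB i hi).2) le_rfl⟩

end Network

/-- covering number bound for fully connected networks: for every ε > 0 there
is a finite set `U` with `ln |U| ≤ (‖X‖_F · R_A / ε)^(1/2)` that ε-covers (in Frobenius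
distance) all outputs of depth-`L` networks whose layer matrices satisfy `‖Aᵢ‖_F ≤ aᵢ`
and `‖Aᵢ‖_σ ≤ sᵢ`, where
`R_A = (2∏ ρᵢ sᵢ)·(Σ dᵢ² d_{i−1}² aᵢ/sᵢ)·L²`. -/
theorem covering_number_fnn (L n : ℕ) (d : ℕ → ℕ)
    (X : Matrix (Fin (d 0)) (Fin n) ℝ)
    (σ : ∀ i : ℕ, Matrix (Fin (d (i+1))) (Fin n) ℝ → Matrix (Fin (d (i+1))) (Fin n) ℝ)
    (ρ s a : ℕ → ℝ)
    (hρ : ∀ i < L, 0 ≤ ρ i) (hs : ∀ i < L, 0 < s i) (ha : ∀ i < L, 0 < a i)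
    (hσ : ∀ i < L, ∀ A B : Matrix (Fin (d (i+1))) (Fin n) ℝ,
      frobNorm (σ i A - σ i B) ≤ ρ i * frobNorm (A - B))
    (hσ0 : ∀ i < L, σ i 0 = 0) :
    ∀ ε > (0 : ℝ), ∃ U : Finset (Matrix (Fin (d L)) (Fin n) ℝ),
      Real.log U.card ≤ Real.sqrt (frobNorm X *
        ((2 * ∏ i ∈ Finset.range L, ρ i * s i) *
          (∑ i ∈ Finset.range L, (d (i+1) : ℝ) ^ 2 * (d i : ℝ) ^ 2 * a i / s i) *
          (L : ℝ) ^ 2) / ε) ∧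
      ∀ A : ∀ i : ℕ, Matrix (Fin (d (i+1))) (Fin (d i)) ℝ,
        (∀ i < L, frobNorm (A i) ≤ a i ∧ specNorm (A i) ≤ s i) →
        ∃ u ∈ U, frobNorm (netOutput d A σ X L - u) ≤ ε := by
  intro ε hε
  simp only [frobNorm_eq_norm_s5] at hσ ⊢
  have ha' (i) (hi : i < L) : 0 ≤ a i := (ha i hi).le
  have hP : 0 ≤ ∏ i ∈ range L, ρ i * s i :=
    prod_nonneg fun i hi => mul_nonneg (hρ i (mem_range.1 hi)) (hs i (mem_range.1 hi)).le
  rcases (mul_nonneg (mul_nonneg (Nat.cast_nonneg L) hP) (norm_nonneg X)).eq_or_lt with hdeg | hpos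
  · refine ⟨{netOutput d 0 σ X L}, by simp [Real.sqrt_nonneg],
      fun A hA => ⟨_, mem_singleton_self _, ?_⟩⟩
    refine (norm_netOutput_sub_netOutput_zero_le (X := X) hρ hσ hσ0 hs ha' hA).trans ?_
    rw [← hdeg, mul_zero]
    exact hε.le
  have hη := div_pos hε hpos
  obtain ⟨U, hUcard, hUcover⟩ := exists_finset_netOutput_cover (X := X) hρ hσ hσ0 hs ha' hη
  refine ⟨U, (log_le_sqrt_of_le_prod_one_add_pow (fun i hi => ?_) hUcard).trans_eq ?_,
    fun A hA => ?_⟩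
  · exact div_nonneg (mul_nonneg zero_le_two (ha' i (mem_range.1 hi)))
      (mul_pos hη (hs i (mem_range.1 hi))).le
  · have hterm (i) (hi : i ∈ range L) :
        (L : ℝ) * (((d (i+1) * d i : ℕ) : ℝ) ^ 2 *
          (2 * a i / (ε / ((L * ∏ i ∈ range L, ρ i * s i) * ‖X‖) * s i))) =
        ‖X‖ * (2 * ∏ i ∈ range L, ρ i * s i) * L ^ 2 / ε *
          ((d (i+1) : ℝ) ^ 2 * (d i : ℝ) ^ 2 * a i / s i) := by
      have := (hs i (mem_range.1 hi)).ne'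
      push_cast
      field_simp
    rw [card_range, mul_sum, sum_congr rfl hterm, ← mul_sum]
    congr 1
    ring
  · obtain ⟨u, hu, hAu⟩ := hUcover A hA
    refine ⟨u, hu, hAu.trans_eq ?_⟩
    field_simp
    exact div_self hpos.ne'
end

section
/- Let W ∈ ℝ^{c×r} be a convolutional weight matrix and let γ(W) ∈ ℝ^{cm×d} be the fully connected matrix built from W via m injective index maps. Then ‖γ(W)‖_σ ≤ √m · ‖W‖_F. -/
lemma specNorm_le_frobNorm {α β : Type*} [Fintype α] [Fintype β] [DecidableEq β]
    (M : Matrix α β ℝ) : specNorm M ≤ frobNorm M := by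
  apply ContinuousLinearMap.opNorm_le_bound _ (Real.sqrt_nonneg _)
  intro x
  simp only [LinearMap.coe_toContinuousLinearMap']
  rw [Matrix.toEuclideanLin_apply]
  rw [EuclideanSpace.norm_eq]
  have hx : ‖x‖ = Real.sqrt (∑ j, (WithLp.equiv 2 (β → ℝ) x j) ^ 2) := by
    rw [EuclideanSpace.norm_eq]
    congr 1
    apply Finset.sum_congr rfl
    intro j _
    rw [Real.norm_eq_abs, sq_abs]
    rfl
  rw [hx, ← Real.sqrt_mul (by positivity)]
  apply Real.sqrt_le_sqrt
  rw [Finset.sum_mul]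
  apply Finset.sum_le_sum
  intro i _
  rw [Real.norm_eq_abs, sq_abs]
  exact Finset.sum_mul_sq_le_sq_mul_sq _ _ _

lemma frobNorm_gamma (c r d m : ℕ) (S : Fin m → Fin r → Fin d)
    (hS : ∀ k, Function.Injective (S k)) (W : Matrix (Fin c) (Fin r) ℝ) :
    frobNorm (gamma S W) = Real.sqrt m * frobNorm W := by
  rw [frobNorm, frobNorm, ← Real.sqrt_mul (by positivity)]
  congr 1
  rw [Fintype.sum_prod_type]
  have key : ∀ (i : Fin c) (k : Fin m), ∑ j, (gamma S W (i, k) j) ^ 2 = ∑ p, (W i p) ^ 2 := by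
    intro i k
    have h0 : ∀ j ∈ Finset.univ \ Finset.image (S k) Finset.univ,
        (gamma S W (i, k) j) ^ 2 = 0 := by
      intro j hj
      simp only [Finset.mem_sdiff, Finset.mem_image] at hj
      have : gamma S W (i, k) j = 0 := by
        apply Finset.sum_eq_zero
        intro p _
        rw [if_neg]
        intro h
        exact hj.2 ⟨p, Finset.mem_univ p, h⟩
      rw [this]; ring
    rw [← Finset.sum_subset (Finset.subset_univ (Finset.image (S k) Finset.univ))
      (fun j _ hj => h0 j (Finset.mem_sdiff.mpr ⟨Finset.mem_univ j, hj⟩))]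
    rw [Finset.sum_image (fun p _ q _ h => hS k h)]
    apply Finset.sum_congr rfl
    intro p _
    congr 1
    unfold gamma
    rw [Finset.sum_eq_single p]
    · simp
    · intro q _ hq
      rw [if_neg (fun h => hq (hS k h))]
    · simp
  calc ∑ i, ∑ k : Fin m, ∑ j, (gamma S W (i, k) j) ^ 2
      = ∑ i, ∑ _k : Fin m, ∑ p, (W i p) ^ 2 := by
        apply Finset.sum_congr rfl; intro i _
        apply Finset.sum_congr rfl; intro k _
        exact key i k
    _ = (m : ℝ) * ∑ i, ∑ p, (W i p) ^ 2 := by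
        simp [Finset.sum_const, Finset.mul_sum]
    _ = _ := rfl

/-- standard convolution: `‖γ(W)‖_σ ≤ √m · ‖W‖_F`. -/
theorem specNorm_gamma_le (c r d m : ℕ) (S : Fin m → Fin r → Fin d)
    (hS : ∀ k, Function.Injective (S k)) (W : Matrix (Fin c) (Fin r) ℝ) :
    specNorm (gamma S W) ≤ Real.sqrt m * frobNorm W := by
  rw [← frobNorm_gamma c r d m S hS W]
  exact specNorm_le_frobNorm _
end

section
/- Let W ∈ ℝ^{c×k} be a depthwise convolutional weight matrix with rows w¹,…,w^c, let stride l satisfy l ≥ k (non-overlapping filters), and let Γ ∈ ℝ^{m′c × mc} be the block-diagonal matrix with diagonal blocks Ω(w¹),…,Ω(w^c). Then ‖Γ‖_σ ≤ ‖W‖_F. -/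
/-- The convolution matrix `Ω(w) ∈ ℝ^{m′×m}` of a filter `w ∈ ℝ^k` with stride `l`:
its `(j,t)` entry is `w p` when `t = l·j + p` for some `p < k` (zero-based indexing),
and `0` otherwise. -/
noncomputable def convMat {k m' m : ℕ} (l : ℕ) (w : Fin k → ℝ) : Matrix (Fin m') (Fin m) ℝ :=
  fun j t => ∑ p : Fin k, if (t : ℕ) = l * (j : ℕ) + (p : ℕ) then w p else 0

/-- non-overlapping depthwise convolution, stride `l ≥ k`: the
block-diagonal matrix `Γ` with blocks `Ω(w¹),…,Ω(w^c)` satisfies `‖Γ‖_σ ≤ ‖W‖_F`. -/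
theorem specNorm_depthwise_nonoverlapping_le (c k l m' m : ℕ)
    (hl : 1 ≤ l) (hm' : 1 ≤ m') (hmk : l * (m' - 1) + k ≤ m)
    (hkl : k ≤ l) (W : Matrix (Fin c) (Fin k) ℝ) :
    specNorm (Matrix.blockDiagonal
        (fun i : Fin c => (convMat l (W i) : Matrix (Fin m') (Fin m) ℝ))) ≤
      frobNorm W := by
  classical
  set A := ∑ i, ∑ p, (W i p) ^ 2 with hA
  have hA0 : 0 ≤ A := Finset.sum_nonneg fun i _ => Finset.sum_nonneg fun p _ => sq_nonneg _
  have hidx : ∀ (j : Fin m') (p : Fin k), l * (j : ℕ) + (p : ℕ) < m := by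
    intro j p
    have h1 : (j : ℕ) ≤ m' - 1 := Nat.le_pred_of_lt j.isLt
    have h2 : l * (j : ℕ) ≤ l * (m' - 1) := Nat.mul_le_mul_left l h1
    have h3 : (p : ℕ) < k := p.isLt
    omega
  set e : Fin m' × Fin k → Fin m := fun q => ⟨l * q.1 + q.2, hidx q.1 q.2⟩ with he
  have heinj : Function.Injective e := by
    rintro ⟨j1, p1⟩ ⟨j2, p2⟩ h
    have h' : l * (j1 : ℕ) + (p1 : ℕ) = l * (j2 : ℕ) + (p2 : ℕ) := congrArg Fin.val h
    have hp1 : (p1 : ℕ) < l := lt_of_lt_of_le p1.isLt hkl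
    have hp2 : (p2 : ℕ) < l := lt_of_lt_of_le p2.isLt hkl
    have hj : (j1 : ℕ) = (j2 : ℕ) := by
      have d1 : (l * (j1 : ℕ) + (p1 : ℕ)) / l = (j1 : ℕ) := by
        rw [Nat.mul_add_div (by omega), Nat.div_eq_of_lt hp1, add_zero]
      have d2 : (l * (j2 : ℕ) + (p2 : ℕ)) / l = (j2 : ℕ) := by
        rw [Nat.mul_add_div (by omega), Nat.div_eq_of_lt hp2, add_zero]
      rw [← d1, ← d2, h']
    have hp : (p1 : ℕ) = (p2 : ℕ) := by
      have := congrArg (fun n => l * n) hj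
      omega
    exact Prod.ext (Fin.ext hj) (Fin.ext hp)
  rw [specNorm]
  have : frobNorm W = Real.sqrt A := rfl
  rw [this]
  apply ContinuousLinearMap.opNorm_le_bound _ (Real.sqrt_nonneg _)
  intro x
  set Γ := Matrix.blockDiagonal
      (fun i : Fin c => (convMat l (W i) : Matrix (Fin m') (Fin m) ℝ)) with hΓ
  have hentry : ∀ j : Fin m', ∀ i : Fin c,
      (Matrix.toEuclideanLin Γ) x (j, i) = ∑ p : Fin k, W i p * x (e (j, p), i) := by
    intro j i
    rw [Matrix.toEuclideanLin_apply]
    show Γ.mulVec (fun ti => x ti) (j, i) = _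
    rw [Matrix.mulVec, dotProduct]
    rw [Fintype.sum_prod_type]
    have step1 : ∀ t : Fin m,
        (∑ i' : Fin c, Γ (j, i) (t, i') * x (t, i')) = convMat l (W i) j t * x (t, i) := by
      intro t
      rw [hΓ]
      simp only [Matrix.blockDiagonal_apply, ite_mul, zero_mul]
      rw [Finset.sum_ite_eq Finset.univ i (fun i' => convMat l (W i) j t * x (t, i'))]
      simp
    simp only [step1]
    unfold convMat
    simp only [Finset.sum_mul]
    rw [Finset.sum_comm]
    refine Finset.sum_congr rfl fun p _ => ?_
    have : ∀ t : Fin m, ((if (t : ℕ) = l * (j : ℕ) + (p : ℕ) then W i p else 0) * x (t, i))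
        = (if t = e (j, p) then W i p * x (t, i) else 0) := by
      intro t
      by_cases h : t = e (j, p)
      · subst h; simp [he]
      · have h2 : ¬ ((t : ℕ) = l * (j : ℕ) + (p : ℕ)) := fun hh => h (Fin.ext hh)
        simp [h, h2]
    simp only [this]
    rw [Finset.sum_ite_eq' Finset.univ (e (j, p)) (fun t => W i p * x (t, i))]
    simp
  simp only [LinearMap.coe_toContinuousLinearMap']
  rw [EuclideanSpace.norm_eq ((Matrix.toEuclideanLin Γ) x), EuclideanSpace.norm_eq x]
  rw [← Real.sqrt_mul hA0]
  apply Real.sqrt_le_sqrt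
  have hsum : (∑ ji : Fin m' × Fin c, ‖(Matrix.toEuclideanLin Γ) x ji‖ ^ 2)
      = ∑ j : Fin m', ∑ i : Fin c, (∑ p : Fin k, W i p * x (e (j, p), i)) ^ 2 := by
    rw [Fintype.sum_prod_type]
    refine Finset.sum_congr rfl fun j _ => Finset.sum_congr rfl fun i _ => ?_
    rw [hentry j i, Real.norm_eq_abs, sq_abs]
  rw [hsum]
  have CS : ∀ j : Fin m', ∀ i : Fin c,
      (∑ p : Fin k, W i p * x (e (j, p), i)) ^ 2
        ≤ A * ∑ p : Fin k, (x (e (j, p), i)) ^ 2 := by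
    intro j i
    calc (∑ p : Fin k, W i p * x (e (j, p), i)) ^ 2
        ≤ (∑ p : Fin k, (W i p) ^ 2) * ∑ p : Fin k, (x (e (j, p), i)) ^ 2 :=
          Finset.sum_mul_sq_le_sq_mul_sq _ _ _
      _ ≤ A * ∑ p : Fin k, (x (e (j, p), i)) ^ 2 := by
          apply mul_le_mul_of_nonneg_right
          · exact Finset.single_le_sum (f := fun i => ∑ p, (W i p) ^ 2)
              (fun i _ => Finset.sum_nonneg fun p _ => sq_nonneg _) (Finset.mem_univ i)
          · exact Finset.sum_nonneg fun p _ => sq_nonneg _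
  calc ∑ j : Fin m', ∑ i : Fin c, (∑ p : Fin k, W i p * x (e (j, p), i)) ^ 2
      ≤ ∑ j : Fin m', ∑ i : Fin c, A * ∑ p : Fin k, (x (e (j, p), i)) ^ 2 :=
        Finset.sum_le_sum fun j _ => Finset.sum_le_sum fun i _ => CS j i
    _ = A * ∑ i : Fin c, ∑ q : Fin m' × Fin k, (x (e q, i)) ^ 2 := by
        rw [Finset.mul_sum]
        rw [Finset.sum_comm]
        refine Finset.sum_congr rfl fun i _ => ?_
        rw [← Finset.mul_sum, Fintype.sum_prod_type]
    _ ≤ A * ∑ i : Fin c, ∑ t : Fin m, (x (t, i)) ^ 2 := by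
        apply mul_le_mul_of_nonneg_left _ hA0
        refine Finset.sum_le_sum fun i _ => ?_
        calc ∑ q : Fin m' × Fin k, (x (e q, i)) ^ 2
            = ∑ t ∈ Finset.univ.image e, (x (t, i)) ^ 2 := by
              rw [Finset.sum_image (fun a _ b _ h => heinj h)]
          _ ≤ ∑ t : Fin m, (x (t, i)) ^ 2 :=
              Finset.sum_le_sum_of_subset_of_nonneg (Finset.subset_univ _)
                (fun t _ _ => sq_nonneg _)
    _ = A * ∑ ti : Fin m × Fin c, ‖x ti‖ ^ 2 := by
        congr 1
        rw [Fintype.sum_prod_type, Finset.sum_comm]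
        simp [Real.norm_eq_abs, sq_abs]
end

section
/- Let w ∈ ℝ^k be a filter and l ≥ 1 a stride, and let Ω(w) ∈ ℝ^{m′×m} be the associated convolution matrix. Then ‖Ω(w)‖_σ ≤ ‖w‖₁, where ‖w‖₁ = Σ_{p=1}^{k} |w_p|. -/
lemma sum_ite_le_of_subsingleton {n : ℕ} (P : Fin n → Prop) [DecidablePred P]
    (hP : ∀ i j, P i → P j → i = j) {a : ℝ} (ha : 0 ≤ a) :
    (∑ i, if P i then a else 0) ≤ a := by
  rw [← Finset.sum_filter, Finset.sum_const, nsmul_eq_mul]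
  have hcard : (Finset.filter P Finset.univ).card ≤ 1 := by
    apply Finset.card_le_one.2
    intro i hi j hj
    exact hP i j (Finset.mem_filter.1 hi).2 (Finset.mem_filter.1 hj).2
  calc ((Finset.filter P Finset.univ).card : ℝ) * a ≤ 1 * a := by
        apply mul_le_mul_of_nonneg_right _ ha
        exact_mod_cast hcard
    _ = a := one_mul a

/-- `‖Ω(w)‖_σ ≤ ‖w‖₁ = Σ_p |w_p|`. -/
theorem specNorm_convMat_le_l1 (k l m' m : ℕ)
    (hl : 1 ≤ l) (hm' : 1 ≤ m') (hmk : l * (m' - 1) + k ≤ m) (w : Fin k → ℝ) :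
    specNorm (convMat l w : Matrix (Fin m') (Fin m) ℝ) ≤ ∑ p, |w p| := by
  classical
  set M : Matrix (Fin m') (Fin m) ℝ := convMat l w with hM
  set L : ℝ := ∑ p, |w p| with hL
  have hL0 : 0 ≤ L := Finset.sum_nonneg fun _ _ => abs_nonneg _
  set A : Fin m' → Fin m → ℝ :=
    fun j t => ∑ p : Fin k, if (t : ℕ) = l * (j : ℕ) + (p : ℕ) then |w p| else 0 with hA
  have hA0 : ∀ j t, 0 ≤ A j t := fun j t =>
    Finset.sum_nonneg fun p _ => by positivity
  have habs : ∀ j t, |M j t| ≤ A j t := by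
    intro j t
    refine (Finset.abs_sum_le_sum_abs _ _).trans_eq ?_
    refine Finset.sum_congr rfl fun p _ => ?_
    rw [apply_ite abs, abs_zero]
  have hrow : ∀ j, ∑ t, A j t ≤ L := by
    intro j
    rw [hA, Finset.sum_comm]
    refine Finset.sum_le_sum fun p _ => ?_
    exact sum_ite_le_of_subsingleton _
      (fun t₁ t₂ h₁ h₂ => Fin.ext (by omega)) (abs_nonneg _)
  have hcol : ∀ t, ∑ j, A j t ≤ L := by
    intro t
    rw [hA, Finset.sum_comm]
    refine Finset.sum_le_sum fun p _ => ?_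
    refine sum_ite_le_of_subsingleton _ (fun j₁ j₂ h₁ h₂ => ?_) (abs_nonneg _)
    have h : l * (j₁ : ℕ) = l * (j₂ : ℕ) := by omega
    exact Fin.ext (Nat.eq_of_mul_eq_mul_left hl h)
  have key : ∀ v : Fin m → ℝ, ∑ j, (M.mulVec v j) ^ 2 ≤ L ^ 2 * ∑ t, (v t) ^ 2 := by
    intro v
    have step1 : ∀ j, (M.mulVec v j) ^ 2 ≤ L * ∑ t, A j t * (v t) ^ 2 := by
      intro j
      have h1 : |M.mulVec v j| ≤ ∑ t, A j t * |v t| := by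
        unfold Matrix.mulVec dotProduct
        refine (Finset.abs_sum_le_sum_abs _ _).trans ?_
        refine Finset.sum_le_sum fun t _ => ?_
        rw [abs_mul]
        exact mul_le_mul_of_nonneg_right (habs j t) (abs_nonneg _)
      have h2 : (∑ t, A j t * |v t|) ^ 2 ≤ (∑ t, A j t) * ∑ t, A j t * (v t) ^ 2 := by
        refine Finset.sum_sq_le_sum_mul_sum_of_sq_eq_mul _ (fun t _ => hA0 j t)
          (fun t _ => by positivity) (fun t _ => ?_)
        rw [mul_pow, sq_abs]; ring
      have h3 : (∑ t, A j t) * ∑ t, A j t * (v t) ^ 2 ≤ L * ∑ t, A j t * (v t) ^ 2 := by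
        refine mul_le_mul_of_nonneg_right (hrow j) ?_
        exact Finset.sum_nonneg fun t _ => by positivity
      calc (M.mulVec v j) ^ 2 ≤ (∑ t, A j t * |v t|) ^ 2 := by
            rw [← sq_abs (M.mulVec v j)]
            exact pow_le_pow_left₀ (abs_nonneg _) h1 2
        _ ≤ _ := h2.trans h3
    calc ∑ j, (M.mulVec v j) ^ 2
        ≤ ∑ j, L * ∑ t, A j t * (v t) ^ 2 := Finset.sum_le_sum fun j _ => step1 j
      _ = L * ∑ t, (∑ j, A j t) * (v t) ^ 2 := by
          rw [← Finset.mul_sum, Finset.sum_comm]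
          simp_rw [Finset.sum_mul]
      _ ≤ L * ∑ t, L * (v t) ^ 2 := by
          refine mul_le_mul_of_nonneg_left (Finset.sum_le_sum fun t _ => ?_) hL0
          exact mul_le_mul_of_nonneg_right (hcol t) (sq_nonneg _)
      _ = L ^ 2 * ∑ t, (v t) ^ 2 := by rw [← Finset.mul_sum]; ring
  show ‖LinearMap.toContinuousLinearMap (Matrix.toEuclideanLin M)‖ ≤ L
  refine ContinuousLinearMap.opNorm_le_bound _ hL0 fun x => ?_
  rw [LinearMap.coe_toContinuousLinearMap']
  rw [EuclideanSpace.norm_eq, EuclideanSpace.norm_eq]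
  have hx : ∀ i, Matrix.toEuclideanLin M x i = M.mulVec (fun t => x t) i := by
    intro i
    rw [Matrix.toEuclideanLin_apply]
  calc Real.sqrt (∑ i, ‖Matrix.toEuclideanLin M x i‖ ^ 2)
      = Real.sqrt (∑ i, (M.mulVec (fun t => x t) i) ^ 2) := by
        congr 1; refine Finset.sum_congr rfl fun i _ => ?_
        rw [hx i, Real.norm_eq_abs, sq_abs]
    _ ≤ Real.sqrt (L ^ 2 * ∑ t, (x t) ^ 2) := Real.sqrt_le_sqrt (key _)
    _ = L * Real.sqrt (∑ t, (x t) ^ 2) := by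
        rw [Real.sqrt_mul (sq_nonneg L), Real.sqrt_sq hL0]
    _ = L * Real.sqrt (∑ t, ‖x t‖ ^ 2) := by
        congr 2
        refine Finset.sum_congr rfl fun t _ => ?_
        rw [Real.norm_eq_abs, sq_abs]
end

section
/- Let W ∈ ℝ^{c×k} be a depthwise convolutional weight matrix with rows w¹,…,w^c, let the stride l satisfy 1 ≤ l < k (overlapping filters), and let Γ ∈ ℝ^{m′c × mc} be the block-diagonal matrix with diagonal blocks Ω(w¹),…,Ω(w^c). Then ‖Γ‖_σ ≤ max_{1≤i≤c} ‖wⁱ‖₁, i.e. the spectral norm is at most the maximum row ℓ₁-norm ‖W‖_∞ of W. -/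
lemma sum_ite_le_of_subsingleton_s15 {α : Type*} [Fintype α] (P : α → Prop) [DecidablePred P]
    (h : ∀ x y, P x → P y → x = y) {a : ℝ} (ha : 0 ≤ a) :
    ∑ x, (if P x then a else 0) ≤ a := by
  by_cases he : ∃ x, P x
  · obtain ⟨x₀, hx₀⟩ := he
    rw [Finset.sum_eq_single x₀]
    · simp [hx₀]
    · intro b _ hb
      simp only [ite_eq_right_iff]
      intro hPb; exact absurd (h b x₀ hPb hx₀) hb
    · simp
  · push_neg at he
    simp [he, ha]

/-- Schur-type bound: if all row and column ℓ¹-norms are at most `B`, then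
the spectral norm is at most `B`. -/
lemma specNorm_le_of_row_col {α β : Type*} [Fintype α] [Fintype β] [DecidableEq β]
    (M : Matrix α β ℝ) {B : ℝ} (hB : 0 ≤ B)
    (hrow : ∀ j, ∑ t, |M j t| ≤ B) (hcol : ∀ t, ∑ j, |M j t| ≤ B) :
    specNorm M ≤ B := by
  apply ContinuousLinearMap.opNorm_le_bound _ hB
  intro x
  have hx : 0 ≤ ‖x‖ := norm_nonneg x
  have hMx : 0 ≤ ‖(LinearMap.toContinuousLinearMap (Matrix.toEuclideanLin M)) x‖ :=
    norm_nonneg _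
  have key : ‖(LinearMap.toContinuousLinearMap (Matrix.toEuclideanLin M)) x‖ ^ 2
      ≤ (B * ‖x‖) ^ 2 := by
    have hnx : ‖x‖ ^ 2 = ∑ t, (x t) ^ 2 := by
      rw [EuclideanSpace.norm_eq, Real.sq_sqrt (Finset.sum_nonneg fun t _ => sq_nonneg _)]
      simp [sq_abs]
    have hnMx : ‖(LinearMap.toContinuousLinearMap (Matrix.toEuclideanLin M)) x‖ ^ 2
        = ∑ j, (∑ t, M j t * x t) ^ 2 := by
      rw [LinearMap.coe_toContinuousLinearMap', EuclideanSpace.norm_eq,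
        Real.sq_sqrt (Finset.sum_nonneg fun t _ => sq_nonneg _)]
      simp [Matrix.toEuclideanLin_apply, Matrix.mulVec, dotProduct, sq_abs]
    rw [hnMx, mul_pow, hnx, Finset.mul_sum]
    have step1 : ∀ j, (∑ t, M j t * x t) ^ 2 ≤ B * ∑ t, |M j t| * (x t) ^ 2 := by
      intro j
      have h1 : (∑ t, M j t * x t) ^ 2 ≤ (∑ t, |M j t| * |x t|) ^ 2 := by
        apply sq_le_sq'
        · calc -(∑ t, |M j t| * |x t|) ≤ -(|∑ t, M j t * x t|) := by
                apply neg_le_neg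
                calc |∑ t, M j t * x t| ≤ ∑ t, |M j t * x t| :=
                      Finset.abs_sum_le_sum_abs _ _
                  _ = ∑ t, |M j t| * |x t| := by simp [abs_mul]
            _ ≤ ∑ t, M j t * x t := neg_abs_le _
        · calc ∑ t, M j t * x t ≤ |∑ t, M j t * x t| := le_abs_self _
            _ ≤ ∑ t, |M j t * x t| := Finset.abs_sum_le_sum_abs _ _
            _ = ∑ t, |M j t| * |x t| := by simp [abs_mul]
      have h2 : (∑ t, |M j t| * |x t|) ^ 2
          ≤ (∑ t, |M j t|) * (∑ t, |M j t| * (x t) ^ 2) := by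
        have cs := Finset.sum_mul_sq_le_sq_mul_sq Finset.univ
          (fun t => Real.sqrt |M j t|) (fun t => Real.sqrt |M j t| * |x t|)
        calc (∑ t, |M j t| * |x t|) ^ 2
            = (∑ t, Real.sqrt |M j t| * (Real.sqrt |M j t| * |x t|)) ^ 2 := by
              congr 1; apply Finset.sum_congr rfl; intro t _
              rw [← mul_assoc, Real.mul_self_sqrt (abs_nonneg _)]
          _ ≤ (∑ t, Real.sqrt |M j t| ^ 2) * (∑ t, (Real.sqrt |M j t| * |x t|) ^ 2) := cs
          _ = (∑ t, |M j t|) * (∑ t, |M j t| * (x t) ^ 2) := by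
              congr 1
              · apply Finset.sum_congr rfl; intro t _; exact Real.sq_sqrt (abs_nonneg _)
              · apply Finset.sum_congr rfl; intro t _
                rw [mul_pow, Real.sq_sqrt (abs_nonneg _), sq_abs]
      calc (∑ t, M j t * x t) ^ 2 ≤ (∑ t, |M j t|) * (∑ t, |M j t| * (x t) ^ 2) :=
            h1.trans h2
        _ ≤ B * ∑ t, |M j t| * (x t) ^ 2 := by
            apply mul_le_mul_of_nonneg_right (hrow j)
            exact Finset.sum_nonneg fun t _ => mul_nonneg (abs_nonneg _) (sq_nonneg _)
    calc ∑ j, (∑ t, M j t * x t) ^ 2 ≤ ∑ j, B * ∑ t, |M j t| * (x t) ^ 2 :=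
          Finset.sum_le_sum fun j _ => step1 j
      _ = B * ∑ t, (∑ j, |M j t|) * (x t) ^ 2 := by
          rw [← Finset.mul_sum, Finset.sum_comm]
          congr 1; apply Finset.sum_congr rfl; intro t _
          rw [Finset.sum_mul]
      _ ≤ B * ∑ t, B * (x t) ^ 2 := by
          apply mul_le_mul_of_nonneg_left _ hB
          exact Finset.sum_le_sum fun t _ =>
            mul_le_mul_of_nonneg_right (hcol t) (sq_nonneg _)
      _ = ∑ t, B ^ 2 * (x t) ^ 2 := by
          rw [Finset.mul_sum]; exact Finset.sum_congr rfl fun t _ => by ring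
  have := Real.sqrt_le_sqrt key
  rwa [Real.sqrt_sq hMx, Real.sqrt_sq (mul_nonneg hB hx)] at this

lemma abs_convMat_le {k m' m : ℕ} (l : ℕ) (w : Fin k → ℝ) (j : Fin m') (t : Fin m) :
    |convMat l w j t| ≤ ∑ p : Fin k, if (t : ℕ) = l * (j : ℕ) + (p : ℕ) then |w p| else 0 := by
  refine (Finset.abs_sum_le_sum_abs _ _).trans ?_
  apply Finset.sum_le_sum
  intro p _
  rw [apply_ite abs, abs_zero]

lemma convMat_row_sum_le {k m' m : ℕ} (l : ℕ) (w : Fin k → ℝ) (j : Fin m') :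
    ∑ t : Fin m, |convMat l w j t| ≤ ∑ p, |w p| := by
  calc ∑ t : Fin m, |convMat l w j t|
      ≤ ∑ t : Fin m, ∑ p : Fin k, if (t : ℕ) = l * (j : ℕ) + (p : ℕ) then |w p| else 0 :=
        Finset.sum_le_sum fun t _ => abs_convMat_le l w j t
    _ = ∑ p : Fin k, ∑ t : Fin m, if (t : ℕ) = l * (j : ℕ) + (p : ℕ) then |w p| else 0 :=
        Finset.sum_comm
    _ ≤ ∑ p, |w p| := by
        apply Finset.sum_le_sum
        intro p _
        apply sum_ite_le_of_subsingleton_s15 _ _ (abs_nonneg _)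
        intro x y hx hy
        exact Fin.ext (by omega)

lemma convMat_col_sum_le {k m' m : ℕ} {l : ℕ} (hl : 1 ≤ l) (w : Fin k → ℝ) (t : Fin m) :
    ∑ j : Fin m', |convMat l w j t| ≤ ∑ p, |w p| := by
  calc ∑ j : Fin m', |convMat l w j t|
      ≤ ∑ j : Fin m', ∑ p : Fin k, if (t : ℕ) = l * (j : ℕ) + (p : ℕ) then |w p| else 0 :=
        Finset.sum_le_sum fun j _ => abs_convMat_le l w j t
    _ = ∑ p : Fin k, ∑ j : Fin m', if (t : ℕ) = l * (j : ℕ) + (p : ℕ) then |w p| else 0 :=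
        Finset.sum_comm
    _ ≤ ∑ p, |w p| := by
        apply Finset.sum_le_sum
        intro p _
        apply sum_ite_le_of_subsingleton_s15 _ _ (abs_nonneg _)
        intro x y hx hy
        have : l * (x : ℕ) = l * (y : ℕ) := by omega
        exact Fin.ext (Nat.eq_of_mul_eq_mul_left hl this)

/-- overlapping depthwise convolution, stride `1 ≤ l < k`: the
block-diagonal matrix `Γ` with blocks `Ω(w¹),…,Ω(w^c)` has spectral norm at most the
maximum row ℓ₁-norm of `W`, i.e. `‖Γ‖_σ ≤ max_i ‖wⁱ‖₁ = ‖W‖_∞`. -/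
theorem specNorm_depthwise_overlapping_le (c k l m' m : ℕ) (hc : 0 < c)
    (hl : 1 ≤ l) (hlk : l < k) (hm' : 1 ≤ m') (hmk : l * (m' - 1) + k ≤ m)
    (W : Matrix (Fin c) (Fin k) ℝ) :
    specNorm (Matrix.blockDiagonal
        (fun i : Fin c => (convMat l (W i) : Matrix (Fin m') (Fin m) ℝ))) ≤
      Finset.univ.sup' ⟨⟨0, hc⟩, Finset.mem_univ _⟩ (fun i : Fin c => ∑ p, |W i p|) := by
  set B := Finset.univ.sup' ⟨⟨0, hc⟩, Finset.mem_univ _⟩ (fun i : Fin c => ∑ p, |W i p|) with hBdef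
  have hrowB : ∀ i : Fin c, ∑ p, |W i p| ≤ B :=
    fun i => Finset.le_sup' (fun i : Fin c => ∑ p, |W i p|) (Finset.mem_univ i)
  have hB : 0 ≤ B :=
    le_trans (Finset.sum_nonneg fun p _ => abs_nonneg _) (hrowB ⟨0, hc⟩)
  apply specNorm_le_of_row_col _ hB
  · rintro ⟨j, i⟩
    calc ∑ t : Fin m × Fin c, |Matrix.blockDiagonal (fun i => convMat l (W i)) (j, i) t|
        = ∑ t : Fin m, ∑ i' : Fin c,
            |Matrix.blockDiagonal (fun i => convMat l (W i)) (j, i) (t, i')| :=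
          Fintype.sum_prod_type
            (f := fun p : Fin m × Fin c =>
              |Matrix.blockDiagonal (fun i => convMat l (W i)) (j, i) p|)
      _ = ∑ t : Fin m, |convMat l (W i) j t| := by
          apply Finset.sum_congr rfl
          intro t _
          rw [Finset.sum_eq_single i]
          · simp [Matrix.blockDiagonal_apply]
          · intro b _ hb; simp [Matrix.blockDiagonal_apply, hb.symm]
          · simp
      _ ≤ ∑ p, |W i p| := convMat_row_sum_le l (W i) j
      _ ≤ B := hrowB i
  · rintro ⟨t, i⟩
    calc ∑ j : Fin m' × Fin c, |Matrix.blockDiagonal (fun i => convMat l (W i)) j (t, i)|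
        = ∑ j : Fin m', ∑ i' : Fin c,
            |Matrix.blockDiagonal (fun i => convMat l (W i)) (j, i') (t, i)| :=
          Fintype.sum_prod_type
            (f := fun p : Fin m' × Fin c =>
              |Matrix.blockDiagonal (fun i => convMat l (W i)) p (t, i)|)
      _ = ∑ j : Fin m', |convMat l (W i) j t| := by
          apply Finset.sum_congr rfl
          intro j _
          rw [Finset.sum_eq_single i]
          · simp [Matrix.blockDiagonal_apply]
          · intro b _ hb; simp [Matrix.blockDiagonal_apply, hb]
          · simp
      _ ≤ ∑ p, |W i p| := convMat_col_sum_le hl (W i) t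
      _ ≤ B := hrowB i
end
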